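/- arXiv:1408.0777 — 2 statements merged into one kernel-verified Lean document; each statement's English description precedes it below -/
import Mathlib

section
/- Let X be an integrable random variable on a probability space, let C be a random variable taking values in a finite set 𝒞, and let 𝓕 be a sub-σ-algebra. Suppose (i) C is measurable with respect to a σ-algebra 𝓖 with 𝓕 ⊆ 𝓖, and (ii) X is conditionally independent of 𝓕 given C, in the sense that E[X | σ(C) ⊔ 𝓕] = E[X | σ(C)] almost surely. Then E[X | 𝓕] = Σ_{c ∈ 𝒞} E[X | C = c] · P(C = c | 𝓕) almost surely, where the sum ranges over c with P(C = c) > 0. -/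
/-!
On `σ(C)` the conditional expectation of `X` is the elementary one, `E[X | C = c]` on each fiber
`{C = c}`, because every `σ(C)`-measurable set is a finite disjoint union of fibers. The tower
property and the decoupling hypothesis give `E[X | 𝓕] = E[E[X | σ(C)] | 𝓕]`, and linearity of
`E[· | 𝓕]` applied to `E[X | σ(C)] = Σ_c E[X | C = c] · 1_{C = c}` yields the decomposition.
Null fibers contribute nothing, since `E[X | C = c] = 0` there.
-/

open MeasureTheory Set

namespace MeasureTheory

variable {Ω 𝒞 E : Type*} {m0 : MeasurableSpace Ω} {μ : Measure Ω} {C : Ω → 𝒞}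
  [NormedAddCommGroup E] [NormedSpace ℝ E]

/-- The elementary conditional expectation `E[X | C = c]`; by the conventions `0⁻¹ = 0` and
`∫ over a null set = 0` it is `0` when `P(C = c) = 0`. -/
noncomputable def fiberMean (μ : Measure Ω) (C : Ω → 𝒞) (X : Ω → E) (c : 𝒞) : E :=
  (μ.real (C ⁻¹' {c}))⁻¹ • ∫ ω in C ⁻¹' {c}, X ω ∂μ

lemma fiberMean_of_measure_eq_zero (X : Ω → E) {c : 𝒞} (hc : μ (C ⁻¹' {c}) = 0) :
    fiberMean μ C X c = 0 := by
  simp [fiberMean, Measure.real, hc]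

variable [MeasurableSpace 𝒞] [MeasurableSingletonClass 𝒞]

lemma setIntegral_fiber_fiberMean_comp [CompleteSpace E] [IsFiniteMeasure μ] (hC : Measurable C)
    (X : Ω → E) (c : 𝒞) :
    ∫ ω in C ⁻¹' {c}, fiberMean μ C X (C ω) ∂μ = ∫ ω in C ⁻¹' {c}, X ω ∂μ := by
  have hfiber : MeasurableSet (C ⁻¹' {c}) := hC (measurableSet_singleton c)
  rw [setIntegral_congr_fun hfiber fun ω (hω : C ω = c) => by rw [hω], setIntegral_const]
  by_cases hc : μ (C ⁻¹' {c}) = 0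
  · simp [Measure.restrict_eq_zero.2 hc, Measure.real, hc]
  · exact smul_inv_smul₀ ((measureReal_ne_zero_iff (measure_ne_top μ _)).2 hc) _

lemma setIntegral_preimage_eq_sum_fiber [Finite 𝒞] (hC : Measurable C) {f : Ω → E}
    (hf : Integrable f μ) (t : Set 𝒞) :
    ∫ ω in C ⁻¹' t, f ω ∂μ = ∑ c ∈ t.toFinite.toFinset, ∫ ω in C ⁻¹' {c}, f ω ∂μ := by
  conv_lhs => rw [← t.toFinite.coe_toFinset, ← biUnion_preimage_singleton]
  exact integral_biUnion_finset _ (fun c _ => hC (measurableSet_singleton c))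
    ((pairwiseDisjoint_fiber C _).subset (subset_univ _)) fun c _ => hf.integrableOn

theorem condExp_comap_ae_eq_fiberMean_comp [CompleteSpace E] [IsFiniteMeasure μ] [Finite 𝒞]
    (hC : Measurable C) {X : Ω → E} (hX : Integrable X μ) :
    μ[X | MeasurableSpace.comap C inferInstance] =ᵐ[μ] fiberMean μ C X ∘ C := by
  have hmeas : StronglyMeasurable[MeasurableSpace.comap C inferInstance] (fiberMean μ C X ∘ C) :=
    StronglyMeasurable.of_discrete.comp_measurable (comap_measurable C)
  have hint : Integrable (fiberMean μ C X ∘ C) μ :=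
    Integrable.of_finite.comp_measurable hC
  refine (ae_eq_condExp_of_forall_setIntegral_eq hC.comap_le hX
    (fun _ _ _ => hint.integrableOn) ?_ hmeas.aestronglyMeasurable).symm
  rintro _ ⟨t, -, rfl⟩ -
  rw [setIntegral_preimage_eq_sum_fiber hC hint, setIntegral_preimage_eq_sum_fiber hC hX]
  exact Finset.sum_congr rfl fun c _ => setIntegral_fiber_fiberMean_comp hC X c

lemma condExp_finsetSum_smul {ι : Type*} [CompleteSpace E] (s : Finset ι) (a : ι → ℝ)
    {f : ι → Ω → E} (hf : ∀ i ∈ s, Integrable (f i) μ) (m : MeasurableSpace Ω) :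
    μ[fun ω => ∑ i ∈ s, a i • f i ω | m] =ᵐ[μ] fun ω => ∑ i ∈ s, a i • μ[f i | m] ω := by
  have hsum : (fun ω => ∑ i ∈ s, a i • f i ω) = ∑ i ∈ s, a i • f i := by
    ext ω; simp [Finset.sum_apply]
  have hterm : ∀ᵐ ω ∂μ, ∀ i ∈ s, μ[a i • f i | m] ω = a i • μ[f i | m] ω :=
    (ae_ball_iff s.countable_toSet).2 fun i _ => condExp_smul (a i) (f i) m
  rw [hsum]
  filter_upwards [condExp_finsetSum (fun i hi => (hf i hi).smul (a i)) m, hterm] with ω hω hω'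
  rw [hω, Finset.sum_apply]
  exact Finset.sum_congr rfl hω'

end MeasureTheory

lemma Finset.sum_mul_indicator_preimage_singleton {Ω 𝒞 R : Type*} [Fintype 𝒞]
    [NonAssocSemiring R] (h : 𝒞 → R) (C : Ω → 𝒞) (ω : Ω) :
    ∑ c, h c * (C ⁻¹' {c}).indicator (fun _ => (1 : R)) ω = h (C ω) := by
  classical
  simp [Set.indicator_apply, eq_comm]

theorem stmt0_general
    {Ω : Type*} {m0 : MeasurableSpace Ω} (μ : Measure Ω) [IsProbabilityMeasure μ]
    {𝒞 : Type*} [Fintype 𝒞] [MeasurableSpace 𝒞] [MeasurableSingletonClass 𝒞]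
    (X : Ω → ℝ) (hXint : Integrable X μ)
    (C : Ω → 𝒞) (hC : Measurable C)
    (𝓕 : MeasurableSpace Ω) (h𝓕 : 𝓕 ≤ m0)
    (hdecouple :
      μ[X | (MeasurableSpace.comap C inferInstance) ⊔ 𝓕]
        =ᵐ[μ] μ[X | MeasurableSpace.comap C inferInstance]) :
    μ[X | 𝓕] =ᵐ[μ]
      fun ω =>
        ∑ c ∈ Finset.univ.filter (fun c : 𝒞 => 0 < μ {ω' | C ω' = c}),
          ((μ {ω' | C ω' = c}).toReal⁻¹ * ∫ ω' in {ω' | C ω' = c}, X ω' ∂μ) *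
            (μ[({ω' | C ω' = c}).indicator (fun _ => (1 : ℝ)) | 𝓕]) ω := by
  have hsplit : fiberMean μ C X ∘ C =
      fun ω => ∑ c, fiberMean μ C X c • (C ⁻¹' {c}).indicator (fun _ => (1 : ℝ)) ω :=
    funext fun ω => (Finset.sum_mul_indicator_preimage_singleton _ C ω).symm
  calc μ[X | 𝓕]
      =ᵐ[μ] μ[μ[X | MeasurableSpace.comap C inferInstance ⊔ 𝓕] | 𝓕] :=
        (condExp_condExp_of_le le_sup_right (sup_le hC.comap_le h𝓕)).symm
    _ =ᵐ[μ] μ[μ[X | MeasurableSpace.comap C inferInstance] | 𝓕] := condExp_congr_ae hdecouple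
    _ =ᵐ[μ] μ[fiberMean μ C X ∘ C | 𝓕] :=
        condExp_congr_ae (condExp_comap_ae_eq_fiberMean_comp hC hXint)
    _ =ᵐ[μ] fun ω =>
          ∑ c, fiberMean μ C X c • μ[(C ⁻¹' {c}).indicator (fun _ => (1 : ℝ)) | 𝓕] ω := by
        rw [hsplit]
        exact condExp_finsetSum_smul _ _
          (fun c _ => (integrable_const 1).indicator (hC (measurableSet_singleton c))) 𝓕
    _ = _ := by
        have hnull : ∀ c, fiberMean μ C X c ≠ 0 → 0 < μ (C ⁻¹' {c}) := fun c hc =>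
          pos_iff_ne_zero.2 fun h0 => hc (fiberMean_of_measure_eq_zero X h0)
        exact funext fun ω => (Finset.sum_filter_of_ne fun c _ hc =>
          hnull c (left_ne_zero_of_mul hc)).symm

/-- Multiresolution decomposition (abstract Theorem 1): if `X` is conditionally
independent of `𝓕` given the finite-valued random variable `C`, then
`E[X | 𝓕] = Σ_c E[X | C = c] · P(C = c | 𝓕)` a.s. -/
theorem stmt0
    {Ω : Type*} {m0 : MeasurableSpace Ω} (μ : Measure Ω) [IsProbabilityMeasure μ]
    {𝒞 : Type*} [Fintype 𝒞] [DecidableEq 𝒞] [MeasurableSpace 𝒞] [MeasurableSingletonClass 𝒞]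
    (X : Ω → ℝ) (hXint : Integrable X μ)
    (C : Ω → 𝒞) (hC : Measurable C)
    (𝓕 𝓖 : MeasurableSpace Ω) (h𝓕 : 𝓕 ≤ m0) (h𝓖 : 𝓖 ≤ m0)
    (h𝓕𝓖 : 𝓕 ≤ 𝓖) (hC𝓖 : MeasurableSpace.comap C inferInstance ≤ 𝓖)
    (hdecouple :
      μ[X | (MeasurableSpace.comap C inferInstance) ⊔ 𝓕]
        =ᵐ[μ] μ[X | MeasurableSpace.comap C inferInstance]) :
    μ[X | 𝓕] =ᵐ[μ]
      fun ω =>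
        ∑ c ∈ Finset.univ.filter (fun c : 𝒞 => 0 < μ {ω' | C ω' = c}),
          ((μ {ω' | C ω' = c}).toReal⁻¹ * ∫ ω' in {ω' | C ω' = c}, X ω' ∂μ) *
            (μ[({ω' | C ω' = c}).indicator (fun _ => (1 : ℝ)) | 𝓕]) ω :=
  stmt0_general μ X hXint C hC 𝓕 h𝓕 hdecouple
end

section
/- Let X, C, 𝓕 be as follows: X integrable, C finite-valued, 𝓕 a sub-σ-algebra, and suppose E[X | σ(C) ⊔ 𝓕] = E[X | σ(C)] a.s. Then for any bounded 𝓕-measurable random variable W, E[X · W] = Σ_{c ∈ 𝒞} E[X | C = c] · E[1_{C=c} · W], with the sum over c with P(C = c) > 0. -/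
/-!
Since `W` is bounded and `σ(C) ⊔ 𝓕`-measurable, it can be pulled out of `E[X | σ(C) ⊔ 𝓕]`, and
the decoupling hypothesis turns `E[X W]` into `E[W · E[X | σ(C)]]`. Being `σ(C)`-measurable,
`E[X | σ(C)]` factors as `g ∘ C`, and integrating over an atom `{C = c}` of positive mass shows
`g c = E[X | C = c]`. Splitting `E[W · g(C)]` over the finitely many atoms, of which the null ones
contribute nothing, gives the formula.
-/

open MeasureTheory Set

section

variable {Ω : Type*} {m0 : MeasurableSpace Ω} {μ : Measure Ω}

theorem integral_indicator_one_mul {s : Set Ω} (hs : MeasurableSet s) (f : Ω → ℝ) :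
    ∫ ω, s.indicator (fun _ => (1 : ℝ)) ω * f ω ∂μ = ∫ ω in s, f ω ∂μ := by
  simp_rw [← indicator_mul_left, one_mul]
  exact integral_indicator hs

theorem integral_mul_condExp_of_bound [IsFiniteMeasure μ] {m : MeasurableSpace Ω} (hm : m ≤ m0)
    {W X : Ω → ℝ} (hW : StronglyMeasurable[m] W) (hX : Integrable X μ) (M : ℝ)
    (hM : ∀ᵐ ω ∂μ, ‖W ω‖ ≤ M) :
    ∫ ω, W ω * X ω ∂μ = ∫ ω, W ω * μ[X | m] ω ∂μ :=
  (integral_condExp hm).symm.trans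
    (integral_congr_ae (condExp_stronglyMeasurable_mul_of_bound hm hW hX M hM))

variable {𝒞 : Type*} [MeasurableSpace 𝒞] [MeasurableSingletonClass 𝒞] {C : Ω → 𝒞}

theorem integral_mul_comp_eq_sum [Fintype 𝒞] (hC : Measurable C) (g : 𝒞 → ℝ) {W : Ω → ℝ}
    (hW : Integrable W μ) :
    ∫ ω, W ω * g (C ω) ∂μ = ∑ c, g c * ∫ ω in {ω | C ω = c}, W ω ∂μ := by
  classical
  have hatom (c : 𝒞) : MeasurableSet {ω | C ω = c} := hC (measurableSet_singleton c)
  simp_rw [← integral_const_mul, ← integral_indicator (hatom _)]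
  rw [← integral_finsetSum _ fun c _ => (hW.const_mul (g c)).indicator (hatom c)]
  congr 1 with ω
  simp [indicator_apply, mul_comm]

theorem apply_eq_average_of_condExp_comap_eq_comp [IsFiniteMeasure μ] (hC : Measurable C)
    {X : Ω → ℝ} (hX : Integrable X μ) {g : 𝒞 → ℝ}
    (hg : μ[X | MeasurableSpace.comap C inferInstance] = g ∘ C) {c : 𝒞}
    (hc : μ {ω | C ω = c} ≠ 0) :
    g c = (μ {ω | C ω = c}).toReal⁻¹ * ∫ ω in {ω | C ω = c}, X ω ∂μ := by
  have hatom : MeasurableSet[MeasurableSpace.comap C inferInstance] {ω | C ω = c} :=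
    ⟨{c}, measurableSet_singleton c, rfl⟩
  have hreal : (μ {ω | C ω = c}).toReal ≠ 0 := ENNReal.toReal_ne_zero.mpr ⟨hc, measure_ne_top _ _⟩
  rw [← setIntegral_condExp hC.comap_le hX hatom, hg,
    setIntegral_congr_fun (g := fun _ => g c) (hC.comap_le _ hatom) fun ω (hω : C ω = c) => by
      simp [hω],
    setIntegral_const, smul_eq_mul, Measure.real, inv_mul_cancel_left₀ hreal]

end

theorem stmt11_general
    {Ω : Type*} {m0 : MeasurableSpace Ω} (μ : Measure Ω) [IsProbabilityMeasure μ]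
    {𝒞 : Type*} [Fintype 𝒞] [MeasurableSpace 𝒞] [MeasurableSingletonClass 𝒞]
    (X : Ω → ℝ) (hXint : Integrable X μ)
    (C : Ω → 𝒞) (hC : Measurable C)
    (𝓕 : MeasurableSpace Ω) (h𝓕 : 𝓕 ≤ m0)
    (hdecouple :
      μ[X | (MeasurableSpace.comap C inferInstance) ⊔ 𝓕]
        =ᵐ[μ] μ[X | MeasurableSpace.comap C inferInstance])
    (W : Ω → ℝ) (hWmeas : Measurable[𝓕] W) (hWbdd : ∃ M, ∀ ω, |W ω| ≤ M) :
    ∫ ω, X ω * W ω ∂μ =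
      ∑ c ∈ Finset.univ.filter (fun c : 𝒞 => 0 < μ {ω' | C ω' = c}),
        ((μ {ω' | C ω' = c}).toReal⁻¹ * ∫ ω' in {ω' | C ω' = c}, X ω' ∂μ) *
          ∫ ω, ({ω' | C ω' = c}).indicator (fun _ => (1 : ℝ)) ω * W ω ∂μ := by
  obtain ⟨M, hM⟩ := hWbdd
  have hm : MeasurableSpace.comap C inferInstance ⊔ 𝓕 ≤ m0 := sup_le hC.comap_le h𝓕
  have hW : StronglyMeasurable[MeasurableSpace.comap C inferInstance ⊔ 𝓕] W :=
    hWmeas.stronglyMeasurable.mono le_sup_right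
  have hWint : Integrable W μ :=
    .of_bound (hW.mono hm).aestronglyMeasurable M (.of_forall hM)
  obtain ⟨g, -, hg⟩ := (stronglyMeasurable_condExp (f := X) (μ := μ)
    (m := MeasurableSpace.comap C inferInstance)).exists_eq_measurable_comp
  calc ∫ ω, X ω * W ω ∂μ
      = ∫ ω, W ω * g (C ω) ∂μ := by
        simp_rw [mul_comm (X _), integral_mul_condExp_of_bound hm hW hXint M (.of_forall hM)]
        refine integral_congr_ae (hdecouple.mono fun ω hω => ?_)
        simp only [hω, hg, Function.comp_apply]
    _ = ∑ c, g c * ∫ ω in {ω' | C ω' = c}, W ω ∂μ := integral_mul_comp_eq_sum hC g hWint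
    _ = ∑ c ∈ Finset.univ.filter (fun c : 𝒞 => 0 < μ {ω' | C ω' = c}),
          g c * ∫ ω in {ω' | C ω' = c}, W ω ∂μ := by
        refine (Finset.sum_filter_of_ne fun c _ hc => pos_iff_ne_zero.mpr fun h0 => hc ?_).symm
        rw [Measure.restrict_eq_zero.mpr h0, integral_zero_measure, mul_zero]
    _ = _ := by
        refine Finset.sum_congr rfl fun c hc => ?_
        rw [integral_indicator_one_mul (s := {ω' | C ω' = c}) (hC (measurableSet_singleton c)),
          apply_eq_average_of_condExp_comap_eq_comp hC hXint hg (Finset.mem_filter.mp hc).2.ne']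

/-- Integrated (weak) form of the multiresolution decomposition: under the
decoupling assumption `E[X | σ(C) ⊔ 𝓕] = E[X | σ(C)]` a.s., for every bounded
`𝓕`-measurable `W`, `E[X·W] = Σ_c E[X | C = c] · E[1_{C=c}·W]`. -/
theorem stmt11
    {Ω : Type*} {m0 : MeasurableSpace Ω} (μ : Measure Ω) [IsProbabilityMeasure μ]
    {𝒞 : Type*} [Fintype 𝒞] [DecidableEq 𝒞] [MeasurableSpace 𝒞] [MeasurableSingletonClass 𝒞]
    (X : Ω → ℝ) (hXint : Integrable X μ)
    (C : Ω → 𝒞) (hC : Measurable C)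
    (𝓕 : MeasurableSpace Ω) (h𝓕 : 𝓕 ≤ m0)
    (hdecouple :
      μ[X | (MeasurableSpace.comap C inferInstance) ⊔ 𝓕]
        =ᵐ[μ] μ[X | MeasurableSpace.comap C inferInstance])
    (W : Ω → ℝ) (hWmeas : Measurable[𝓕] W) (hWbdd : ∃ M, ∀ ω, |W ω| ≤ M) :
    ∫ ω, X ω * W ω ∂μ =
      ∑ c ∈ Finset.univ.filter (fun c : 𝒞 => 0 < μ {ω' | C ω' = c}),
        ((μ {ω' | C ω' = c}).toReal⁻¹ * ∫ ω' in {ω' | C ω' = c}, X ω' ∂μ) *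
          ∫ ω, ({ω' | C ω' = c}).indicator (fun _ => (1 : ℝ)) ω * W ω ∂μ :=
  stmt11_general μ X hXint C hC 𝓕 h𝓕 hdecouple W hWmeas hWbdd
end
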